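/- For every real b > 0, the non-compact quantum dilogarithm z ↦ e_b(z) is holomorphic on the open strip {z ∈ ℂ : |Im z| < (b + b^{-1})/2} and is nonvanishing at every point of this strip. -/

import Mathlib

noncomputable section
open Complex MeasureTheory Filter Topology

/-- The integrand of the contour-integral definition of the non-compact quantum
dilogarithm: `w ↦ exp (-2 i z w) / (sinh (w b) * sinh (w / b) * w)`. -/
def qdlIntegrand (b z w : ℂ) : ℂ :=
  Complex.exp (-2 * Complex.I * z * w) / (Complex.sinh (w * b) * Complex.sinh (w / b) * w)

/-- The non-compact quantum dilogarithm `e_b(z)`, defined by the contour integral over the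
horizontal line `ℝ + iε`, with the canonical choice `ε = (π/2) * min (Re b) (Re b⁻¹)`
(for real `b > 0` this is `(π/2) * min b b⁻¹`, which lies in `(0, π min(b,b⁻¹))`; the
integral is independent of the choice of admissible `ε`). -/
def qdl (b z : ℂ) : ℂ :=
  Complex.exp ((1 / 4) *
    ∫ t : ℝ, qdlIntegrand b z ((t : ℂ) + ((Real.pi / 2 * min b.re (1 / b).re : ℝ) : ℂ) * Complex.I))

/-!
On the line `w = t + iε` with `0 < ε < π min(b, b⁻¹)` one has
`‖sinh (wb) sinh (w/b) w‖ ≥ κ e^{(b + b⁻¹)|t|}` for some `κ > 0` (from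
`‖sinh w‖ ≥ |sin (Im w)| cosh (Re w)`), while `‖e^{-2izw}‖ ≤ e^{2|Re z|ε + 2|Im z||t|}`.
So for `|Im z| < (b + b⁻¹)/2` the integrand and its `z`-derivative are dominated, locally
uniformly in `z`, by integrable exponentials in `t`, and the integral is holomorphic by
differentiation under the integral sign. Nonvanishing is automatic, `e_b` being an exponential.
-/

open Set Real

theorem integrable_exp_neg_mul_abs {a : ℝ} (ha : 0 < a) :
    Integrable fun t : ℝ => rexp (-(a * |t|)) := by
  have hIoi : IntegrableOn (fun t : ℝ => rexp (-(a * |t|))) (Ioi 0) :=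
    (exp_neg_integrableOn_Ioi 0 ha).congr_fun
      (fun t ht => by simp [abs_of_pos (mem_Ioi.1 ht)]) measurableSet_Ioi
  have hIic : IntegrableOn (fun t : ℝ => rexp (-(a * |t|))) (Iic 0) := by
    have hneg : MeasurableEmbedding fun t : ℝ => -t := (Homeomorph.neg ℝ).measurableEmbedding
    rw [← Measure.map_neg_eq_self (volume : Measure ℝ), hneg.integrableOn_map_iff]
    simpa [Function.comp_def, integrableOn_Ici_iff_integrableOn_Ioi] using hIoi
  simpa [← integrableOn_univ] using hIic.union hIoi

theorem integrable_abs_mul_exp_neg_mul_abs {a : ℝ} (ha : 0 < a) :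
    Integrable fun t : ℝ => |t| * rexp (-(a * |t|)) := by
  refine ((integrable_exp_neg_mul_abs (half_pos ha)).const_mul (2 / a)).mono'
    (by fun_prop) (Eventually.of_forall fun t => ?_)
  set x := a / 2 * |t| with hx_def
  have hx : x * rexp (-x) ≤ 1 := by
    rw [Real.exp_neg, ← div_eq_mul_inv, div_le_one (exp_pos _)]
    linarith [add_one_le_exp x]
  rw [norm_mul, Real.norm_eq_abs, abs_abs, Real.norm_of_nonneg (exp_pos _).le]
  calc |t| * rexp (-(a * |t|)) = 2 / a * (x * rexp (-x)) * rexp (-x) := by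
        rw [mul_assoc, mul_assoc, ← Real.exp_add, hx_def]; field_simp; ring_nf
    _ ≤ 2 / a * 1 * rexp (-x) := by gcongr
    _ = 2 / a * rexp (-x) := by ring

theorem Complex.abs_sin_im_mul_cosh_re_le_norm_sinh (w : ℂ) :
    |Real.sin w.im| * Real.cosh w.re ≤ ‖Complex.sinh w‖ := by
  have hw : Complex.sinh w = (Real.sinh w.re * Real.cos w.im : ℝ)
      + (Real.cosh w.re * Real.sin w.im : ℝ) * I := by
    conv_lhs => rw [← Complex.re_add_im w]
    rw [Complex.sinh_add, Complex.sinh_mul_I, Complex.cosh_mul_I]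
    push_cast; ring
  have hsq : ‖Complex.sinh w‖ ^ 2 =
      (Real.sinh w.re * Real.cos w.im) ^ 2 + (Real.cosh w.re * Real.sin w.im) ^ 2 := by
    rw [hw, Complex.sq_norm, Complex.normSq_add_mul_I]
  rw [mul_comm, ← abs_of_pos (Real.cosh_pos w.re), ← abs_mul,
    ← pow_le_pow_iff_left₀ (abs_nonneg _) (norm_nonneg _) two_ne_zero, sq_abs, hsq]
  exact le_add_of_nonneg_left (sq_nonneg _)

theorem Real.exp_abs_le_two_mul_cosh (x : ℝ) : rexp |x| ≤ 2 * Real.cosh x := by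
  rw [Real.cosh_eq]; linarith [Real.exp_abs_le x]

theorem norm_cexp_neg_two_I_mul_le (z w : ℂ) :
    ‖cexp (-2 * I * z * w)‖ ≤ rexp (2 * (|z.re| * |w.im| + |z.im| * |w.re|)) := by
  have hre : (-2 * I * z * w).re = 2 * (z.re * w.im + z.im * w.re) := by
    simp [Complex.mul_re, Complex.mul_im]; ring
  rw [Complex.norm_exp, hre, Real.exp_le_exp]
  have h1 := abs_mul z.re w.im ▸ le_abs_self (z.re * w.im)
  have h2 := abs_mul z.im w.re ▸ le_abs_self (z.im * w.re)
  linarith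

section Contour

variable {b ε : ℝ}

theorem sin_mul_pos_and_sin_div_pos (hb : 0 < b) (hε : 0 < ε) (hεπ : ε < π * min b b⁻¹) :
    0 < Real.sin (ε * b) ∧ 0 < Real.sin (ε / b) := by
  have hεb : ε * b < π := by
    calc ε * b < π * b⁻¹ * b := by gcongr; exact hεπ.trans_le (by gcongr; exact min_le_right _ _)
      _ = π := by field_simp
  have hεb' : ε / b < π := by
    rw [div_lt_iff₀ hb]; exact hεπ.trans_le (by gcongr; exact min_le_left _ _)
  exact ⟨sin_pos_of_pos_of_lt_pi (by positivity) hεb, sin_pos_of_pos_of_lt_pi (by positivity) hεb'⟩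

theorem norm_sinh_mul_sinh_div_mul_ge (hb : 0 < b) (t : ℝ) :
    |ε * Real.sin (ε * b) * Real.sin (ε / b)| / 4 * rexp ((b + b⁻¹) * |t|) ≤
      ‖Complex.sinh (((t : ℂ) + ε * I) * b) * Complex.sinh (((t : ℂ) + ε * I) / b) *
        ((t : ℂ) + ε * I)‖ := by
  have h₁ := Complex.abs_sin_im_mul_cosh_re_le_norm_sinh (((t : ℂ) + ε * I) * b)
  have h₂ := Complex.abs_sin_im_mul_cosh_re_le_norm_sinh (((t : ℂ) + ε * I) / b)
  have h₃ : |ε| ≤ ‖(t : ℂ) + ε * I‖ := by simpa using Complex.abs_im_le_norm ((t : ℂ) + ε * I)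
  have e₁ := Real.exp_abs_le_two_mul_cosh (t * b)
  have e₂ := Real.exp_abs_le_two_mul_cosh (t / b)
  simp only [Complex.mul_re, Complex.mul_im, Complex.div_ofReal_re, Complex.div_ofReal_im,
    Complex.add_re, Complex.add_im, Complex.ofReal_re, Complex.ofReal_im, Complex.I_re,
    Complex.I_im, mul_zero, mul_one, sub_zero, add_zero, zero_add] at h₁ h₂
  have hexp : rexp ((b + b⁻¹) * |t|) = rexp |t * b| * rexp |t / b| := by
    rw [← Real.exp_add, abs_mul, abs_div, abs_of_pos hb]; ring_nf
  rw [norm_mul, norm_mul, hexp, abs_mul, abs_mul]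
  calc |ε| * |Real.sin (ε * b)| * |Real.sin (ε / b)| / 4 * (rexp |t * b| * rexp |t / b|)
      = |Real.sin (ε * b)| * (rexp |t * b| / 2) * (|Real.sin (ε / b)| * (rexp |t / b| / 2)) *
          |ε| := by ring
    _ ≤ |Real.sin (ε * b)| * Real.cosh (t * b) * (|Real.sin (ε / b)| * Real.cosh (t / b)) *
          |ε| := by gcongr <;> linarith
    _ ≤ _ := by gcongr

theorem norm_qdlIntegrand_le (hb : 0 < b) (hε : 0 < ε) (hεπ : ε < π * min b b⁻¹)
    {z : ℂ} {R δ : ℝ} (hR : |z.re| ≤ R) (hδ : |z.im| ≤ δ) (t : ℝ) :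
    ‖qdlIntegrand b z ((t : ℂ) + ε * I)‖ ≤
      4 * rexp (2 * R * ε) / (ε * Real.sin (ε * b) * Real.sin (ε / b)) *
        rexp (-((b + b⁻¹ - 2 * δ) * |t|)) := by
  obtain ⟨hs₁, hs₂⟩ := sin_mul_pos_and_sin_div_pos hb hε hεπ
  have hnum : ‖cexp (-2 * I * z * ((t : ℂ) + ε * I))‖ ≤ rexp (2 * R * ε + 2 * δ * |t|) := by
    refine (norm_cexp_neg_two_I_mul_le _ _).trans (Real.exp_le_exp.2 ?_)
    simp only [Complex.add_re, Complex.add_im, Complex.ofReal_re, Complex.ofReal_im,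
      Complex.mul_re, Complex.mul_im, Complex.I_re, Complex.I_im, mul_zero, mul_one, sub_zero,
      add_zero, zero_add, abs_of_pos hε]
    nlinarith [abs_nonneg t, abs_nonneg z.re]
  have hden := norm_sinh_mul_sinh_div_mul_ge (ε := ε) hb t
  rw [abs_of_pos (by positivity)] at hden
  rw [qdlIntegrand, norm_div]
  calc _ ≤ rexp (2 * R * ε + 2 * δ * |t|) /
        (ε * Real.sin (ε * b) * Real.sin (ε / b) / 4 * rexp ((b + b⁻¹) * |t|)) := by
        gcongr
    _ = _ := by
        rw [Real.exp_add, show -((b + b⁻¹ - 2 * δ) * |t|) = 2 * δ * |t| - (b + b⁻¹) * |t| by ring,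
          Real.exp_sub]
        field_simp

theorem measurable_qdlIntegrand (b z : ℂ) : Measurable (qdlIntegrand b z) := by
  unfold qdlIntegrand
  fun_prop

theorem hasDerivAt_qdlIntegrand (b z w : ℂ) :
    HasDerivAt (fun z => qdlIntegrand b z w) (-2 * I * w * qdlIntegrand b z w) z := by
  have h : HasDerivAt (fun z => -2 * I * z * w) (-2 * I * w) z := by
    simpa using ((hasDerivAt_id z).const_mul (-2 * I)).mul_const w
  have h' := h.cexp.div_const (Complex.sinh (w * b) * Complex.sinh (w / b) * w)
  rw [show -2 * I * w * qdlIntegrand b z w =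
      cexp (-2 * I * z * w) * (-2 * I * w) / (Complex.sinh (w * b) * Complex.sinh (w / b) * w) by
    unfold qdlIntegrand; ring]
  exact h'

theorem differentiableOn_integral_qdlIntegrand (hb : 0 < b) (hε : 0 < ε)
    (hεπ : ε < π * min b b⁻¹) :
    DifferentiableOn ℂ (fun z => ∫ t : ℝ, qdlIntegrand b z ((t : ℂ) + ε * I))
      {z : ℂ | |z.im| < (b + b⁻¹) / 2} := by
  intro z₀ hz₀
  obtain ⟨δ, hδ₀, hδ⟩ := exists_between (show |z₀.im| < (b + b⁻¹) / 2 from hz₀)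
  set r := δ - |z₀.im| with hr_def
  have hr : 0 < r := sub_pos.2 hδ₀
  set a := b + b⁻¹ - 2 * δ with ha_def
  have ha : 0 < a := by linarith
  set K := 4 * rexp (2 * (|z₀.re| + r) * ε) / (ε * Real.sin (ε * b) * Real.sin (ε / b))
  have hbound : ∀ z ∈ Metric.ball z₀ r, ∀ t : ℝ,
      ‖qdlIntegrand b z ((t : ℂ) + ε * I)‖ ≤ K * rexp (-(a * |t|)) := by
    intro z hz t
    have hz' : ‖z - z₀‖ < r := by rwa [← dist_eq_norm]
    have hre := (abs_sub_abs_le_abs_sub z.re z₀.re).trans (Complex.abs_re_le_norm (z - z₀))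
    have him := (abs_sub_abs_le_abs_sub z.im z₀.im).trans (Complex.abs_im_le_norm (z - z₀))
    exact norm_qdlIntegrand_le (R := |z₀.re| + r) hb hε hεπ (by linarith) (by linarith) t
  have hmeas (z : ℂ) : Measurable fun t : ℝ => qdlIntegrand b z ((t : ℂ) + ε * I) :=
    (measurable_qdlIntegrand b z).comp (by fun_prop)
  have hderiv_bound : ∀ t : ℝ, ∀ z ∈ Metric.ball z₀ r,
      ‖-2 * I * ((t : ℂ) + ε * I) * qdlIntegrand b z ((t : ℂ) + ε * I)‖ ≤
        2 * K * (|t| * rexp (-(a * |t|)) + ε * rexp (-(a * |t|))) := by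
    intro t z hz
    have hw : ‖(t : ℂ) + ε * I‖ ≤ |t| + ε := by
      simpa [abs_of_pos hε] using norm_add_le (t : ℂ) (ε * I)
    simp only [norm_mul, norm_neg, Complex.norm_ofNat, Complex.norm_I, mul_one]
    calc 2 * ‖(t : ℂ) + ε * I‖ * ‖qdlIntegrand b z ((t : ℂ) + ε * I)‖
        ≤ 2 * (|t| + ε) * (K * rexp (-(a * |t|))) := by
          gcongr
          exact hbound z hz t
      _ = _ := by ring
  have hF_int : Integrable fun t : ℝ => qdlIntegrand b z₀ ((t : ℂ) + ε * I) :=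
    ((integrable_exp_neg_mul_abs ha).const_mul K).mono' (hmeas z₀).aestronglyMeasurable
      (Eventually.of_forall (hbound z₀ (Metric.mem_ball_self hr)))
  have hderiv := hasDerivAt_integral_of_dominated_loc_of_deriv_le (Metric.ball_mem_nhds z₀ hr)
    (Eventually.of_forall fun z => (hmeas z).aestronglyMeasurable) hF_int
    (((by fun_prop : Measurable fun t : ℝ => -2 * I * ((t : ℂ) + ε * I)).mul
      (hmeas z₀)).aestronglyMeasurable)
    (Eventually.of_forall hderiv_bound)
    (((integrable_abs_mul_exp_neg_mul_abs ha).add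
      ((integrable_exp_neg_mul_abs ha).const_mul ε)).const_mul (2 * K))
    (Eventually.of_forall fun t z _ => hasDerivAt_qdlIntegrand b z _)
  exact hderiv.2.differentiableAt.differentiableWithinAt

end Contour

/-- For every real `b > 0`, the non-compact quantum dilogarithm `z ↦ e_b(z)` is holomorphic
on the open strip `{z : |Im z| < (b + b⁻¹)/2}` and nonvanishing at every point of it. -/
theorem qdl_differentiableOn_strip_and_ne_zero (b : ℝ) (hb : 0 < b) :
    DifferentiableOn ℂ (qdl (b : ℂ)) {z : ℂ | |z.im| < (b + b⁻¹) / 2} ∧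
    ∀ z ∈ {z : ℂ | |z.im| < (b + b⁻¹) / 2}, qdl (b : ℂ) z ≠ 0 := by
  refine ⟨?_, fun z _ => Complex.exp_ne_zero _⟩
  have hheight : Real.pi / 2 * min (b : ℂ).re (1 / (b : ℂ)).re = π / 2 * min b b⁻¹ := by
    simp
  have hmin : 0 < min b b⁻¹ := lt_min hb (inv_pos.2 hb)
  have hε : 0 < π / 2 * min b b⁻¹ := by positivity
  have hεπ : π / 2 * min b b⁻¹ < π * min b b⁻¹ := by nlinarith [pi_pos]
  unfold qdl
  rw [hheight]
  exact ((differentiableOn_integral_qdlIntegrand hb hε hεπ).const_mul _).cexp
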